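/- Let h₁, h₂, h₃ be real numbers with h₁² ≥ h₂² ≥ h₃² and let P > 0 satisfy h₂²·P > 1/2. Then [ C((h₂² + h₃²)·P) + C(min{(h₁² + h₃²)·P, (|h₂| + |h₃|)²·P}) ] − 2·C(h₂²·P − 1/2) ≤ log₂(2 + 1/(h₂²·P)) + 1/2. -/

import Mathlib

/-! With `x = h₂²P`, the hypothesis `h₃² ≤ h₂²` gives `(h₂² + h₃²)P ≤ 2x` and `(|h₂| + |h₃|)²P ≤ 4x`,
so by monotonicity of `C` the gap is at most `C(2x) + C(4x) - 2 C(x - 1/2)`. Since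
`2 C(x - 1/2) = log₂(1 + 2x) - 1` and `1 + 4x ≤ 2(1 + 2x)`, this is at most `3/2`, while the right-hand
side is at least `log₂ 2 + 1/2 = 3/2`. -/

/-- The Gaussian capacity function C(x) = (1/2)·log₂(1 + x). -/
noncomputable def Cap (x : ℝ) : ℝ := (1/2) * Real.logb 2 (1 + x)

open Real

lemma Cap_le_Cap {x y : ℝ} (hx : -1 < x) (hxy : x ≤ y) : Cap x ≤ Cap y := by
  unfold Cap
  gcongr
  · norm_num
  · linarith

lemma abs_add_abs_sq_le_four_mul_sq {a b : ℝ} (h : b ^ 2 ≤ a ^ 2) : (|a| + |b|) ^ 2 ≤ 4 * a ^ 2 := by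
  have hba : |b| ≤ |a| := sq_le_sq.mp h
  calc (|a| + |b|) ^ 2 ≤ (2 * |a|) ^ 2 := by gcongr; linarith
    _ = 4 * a ^ 2 := by rw [mul_pow, sq_abs]; norm_num

lemma two_mul_Cap_sub_half {x : ℝ} (hx : 1 + 2 * x ≠ 0) :
    2 * Cap (x - 1/2) = logb 2 (1 + 2 * x) - 1 := by
  rw [Cap, show 1 + (x - 1/2) = (1 + 2 * x) / 2 by ring, logb_div hx two_ne_zero,
    logb_self_eq_one one_lt_two]
  ring

lemma logb_one_add_four_mul_le {x : ℝ} (hx : 0 ≤ x) :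
    logb 2 (1 + 4 * x) ≤ logb 2 (1 + 2 * x) + 1 := by
  calc logb 2 (1 + 4 * x) ≤ logb 2 (2 * (1 + 2 * x)) :=
        logb_le_logb_of_le one_lt_two (by positivity) (by linarith)
    _ = logb 2 (1 + 2 * x) + 1 := by
        rw [logb_mul two_ne_zero (by positivity), logb_self_eq_one one_lt_two, add_comm]

lemma Cap_two_mul_add_Cap_four_mul_sub_le {x : ℝ} (hx : 0 ≤ x) :
    Cap (2 * x) + Cap (4 * x) - 2 * Cap (x - 1/2) ≤ 3/2 := by
  rw [two_mul_Cap_sub_half (by positivity)]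
  have := logb_one_add_four_mul_le hx
  unfold Cap
  linarith

lemma one_le_logb_two_add_one_div {x : ℝ} (hx : 0 ≤ x) : 1 ≤ logb 2 (2 + 1 / x) := by
  rw [← logb_self_eq_one one_lt_two]
  exact logb_le_logb_of_le one_lt_two two_pos (by simp [hx])

theorem additive_gap_high_power_general (h₁ h₂ h₃ P : ℝ)
    (h23 : h₂^2 ≥ h₃^2) (hP : P > 0)
    (hhigh : h₂^2 * P > 1/2) :
    (Cap ((h₂^2 + h₃^2) * P)
        + Cap (min ((h₁^2 + h₃^2) * P) ((|h₂| + |h₃|)^2 * P)))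
      - 2 * Cap (h₂^2 * P - 1/2)
      ≤ Real.logb 2 (2 + 1 / (h₂^2 * P)) + 1/2 := by
  set x := h₂ ^ 2 * P
  have hx : 0 ≤ x := by linarith
  have first : Cap ((h₂^2 + h₃^2) * P) ≤ Cap (2 * x) :=
    Cap_le_Cap (neg_one_lt_zero.trans_le (by positivity)) (by nlinarith)
  have second : Cap (min ((h₁^2 + h₃^2) * P) ((|h₂| + |h₃|)^2 * P)) ≤ Cap (4 * x) := by
    refine Cap_le_Cap (neg_one_lt_zero.trans_le (le_min (by positivity) (by positivity)))
      ((min_le_right _ _).trans ?_)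
    nlinarith [abs_add_abs_sq_le_four_mul_sq h23]
  linarith [Cap_two_mul_add_Cap_four_mul_sub_le hx, one_le_logb_two_add_one_div hx]

/-- Additive gap bound Γ_{a2} ≤ log₂(2 + 1/(h₂²P)) + 1/2 for h₂²P > 1/2. -/
theorem additive_gap_high_power (h₁ h₂ h₃ P : ℝ)
    (h12 : h₁^2 ≥ h₂^2) (h23 : h₂^2 ≥ h₃^2) (hP : P > 0)
    (hhigh : h₂^2 * P > 1/2) :
    (Cap ((h₂^2 + h₃^2) * P)
        + Cap (min ((h₁^2 + h₃^2) * P) ((|h₂| + |h₃|)^2 * P)))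
      - 2 * Cap (h₂^2 * P - 1/2)
      ≤ Real.logb 2 (2 + 1 / (h₂^2 * P)) + 1/2 :=
  additive_gap_high_power_general h₁ h₂ h₃ P h23 hP hhigh
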